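/- For every integer n ≥ 1 and every real number r with 0 ≤ r ≤ 1, the sum ∑_{i=1}^n i^r is at least n(n+1)^r/(r+1). -/

import Mathlib

/-!
Induction on `n`. Passing from `n` to `n + 1` adds `(n + 1) ^ r` on the left, and on the right
it suffices that `(n + 1) (n + 2) ^ r ≤ (n + 1 + r) (n + 1) ^ r`; writing
`n + 2 = (n + 1) (1 + 1 / (n + 1))`, this is Bernoulli's inequality `(1 + s) ^ r ≤ 1 + r s`,
valid for `0 ≤ r ≤ 1`.
-/

open Finset

lemma mul_add_one_rpow_le {x r : ℝ} (hx : 0 < x) (hr0 : 0 ≤ r) (hr1 : r ≤ 1) :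
    x * (x + 1) ^ r ≤ (x + r) * x ^ r := by
  have hsplit : x + 1 = x * (1 + x⁻¹) := by field_simp
  have bernoulli : (1 + x⁻¹) ^ r ≤ 1 + r * x⁻¹ :=
    rpow_one_add_le_one_add_mul_self (by linarith [inv_pos.mpr hx]) hr0 hr1
  calc x * (x + 1) ^ r = x * x ^ r * (1 + x⁻¹) ^ r := by
        rw [hsplit, Real.mul_rpow hx.le (by positivity), mul_assoc]
    _ ≤ x * x ^ r * (1 + r * x⁻¹) := by gcongr
    _ = (x + r) * x ^ r := by field_simp

theorem levin_steckin_low (n : ℕ) (r : ℝ) (hr0 : 0 ≤ r) (hr1 : r ≤ 1) :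
    ∑ i ∈ Finset.Icc 1 n, (i : ℝ) ^ r ≥ n * (n + 1 : ℝ) ^ r / (r + 1) := by
  have hr : 0 < r + 1 := by linarith
  induction n with
  | zero => simp
  | succ n ih =>
    rw [sum_Icc_succ_top (by omega), ge_iff_le]
    have hstep : ((n + 1 : ℕ) : ℝ) * ((n + 1 : ℕ) + 1 : ℝ) ^ r
        ≤ n * (n + 1 : ℝ) ^ r + (r + 1) * ((n + 1 : ℕ) : ℝ) ^ r := by
      have := mul_add_one_rpow_le (x := (n + 1 : ℕ)) (by positivity) hr0 hr1
      push_cast at this ⊢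
      linarith
    calc ((n + 1 : ℕ) : ℝ) * ((n + 1 : ℕ) + 1 : ℝ) ^ r / (r + 1)
        ≤ n * (n + 1 : ℝ) ^ r / (r + 1) + ((n + 1 : ℕ) : ℝ) ^ r := by
          rw [div_add' _ _ _ hr.ne', div_le_div_iff_of_pos_right hr]
          linarith
      _ ≤ ∑ i ∈ Icc 1 n, (i : ℝ) ^ r + ((n + 1 : ℕ) : ℝ) ^ r := by gcongr
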